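/- Let F : A ⥤ B be a functor and let P_F be its iso-comma category with projections p : P_F ⥤ A and q : P_F ⥤ B. Then: (1) q is an isofibration; (2) the functor r : A ⥤ P_F sending a to (a, F.obj a, identity isomorphism) is an equivalence of categories and satisfies q ∘ r = F; (3) consequently, F is an equivalence of categories if and only if q is a surjective equivalence, i.e. both an equivalence of categories and an isofibration. -/

import Mathlib

/-!
The first projection `p` is a quasi-inverse of `r`: an object `(a, b, β)` is isomorphic to
`r a = (a, F a, 𝟙)` via `(𝟙 a, β)`. An isomorphism `γ : b ≅ b'` lifts along `q` to
`(𝟙 a, γ) : (a, b, β) ≅ (a, b', β ≫ γ)`. Since `r ⋙ q = F` on the nose and `r` is an equivalence,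
`F` is an equivalence exactly when `q` is.
-/

open CategoryTheory CategoryTheory.Limits

universe v₁ v₂ u₁ u₂

variable {A : Type u₁} [Category.{v₁} A] {B : Type u₂} [Category.{v₂} B]

/-- A functor is an isofibration if every isomorphism whose domain is in the image
can be lifted. -/
def Isofibration (F : A ⥤ B) : Prop :=
  ∀ (a : A) (b : B) (β : F.obj a ≅ b),
    ∃ (a' : A) (α : a ≅ a') (h : F.obj a' = b), F.mapIso α ≪≫ eqToIso h = β

/-- The iso-comma category of a functor `F : A ⥤ B`: objects are triples `(a, b, β)` with
`β : F.obj a ≅ b`. -/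
abbrev IsoComma (F : A ⥤ B) : Type _ :=
  ObjectProperty.FullSubcategory (fun X : Comma F (𝟭 B) => IsIso X.hom)

namespace IsoComma

variable (F : A ⥤ B)

/-- First projection of the iso-comma category. -/
def p : IsoComma F ⥤ A :=
  ObjectProperty.ι _ ⋙ Comma.fst F (𝟭 B)

/-- Second projection of the iso-comma category. -/
def q : IsoComma F ⥤ B :=
  ObjectProperty.ι _ ⋙ Comma.snd F (𝟭 B)

/-- The canonical functor `r : A ⥤ P_F` sending `a` to `(a, F.obj a, Iso.refl _)`. -/
def r : A ⥤ IsoComma F where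
  obj a := ⟨⟨a, F.obj a, 𝟙 _⟩, inferInstance⟩
  map {a a'} u := ObjectProperty.homMk (show (⟨a, F.obj a, 𝟙 _⟩ : Comma F (𝟭 B)) ⟶ ⟨a', F.obj a', 𝟙 _⟩ from
    { left := u
      right := F.map u })

end IsoComma

lemma CategoryTheory.Functor.isEquivalence_comp_iff_of_isEquivalence_left {C D E : Type*}
    [Category* C] [Category* D] [Category* E] (F : C ⥤ D) (G : D ⥤ E) [F.IsEquivalence] :
    (F ⋙ G).IsEquivalence ↔ G.IsEquivalence :=
  ⟨fun _ => isEquivalence_of_comp_left F G, fun _ => inferInstance⟩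

namespace IsoComma

variable (F : A ⥤ B)

lemma isofibration_q : Isofibration (q F) := by
  rintro ⟨⟨a, b, f⟩, (hf : IsIso f)⟩ b' β
  refine ⟨⟨⟨a, b', f ≫ β.hom⟩, (asIso f ≪≫ β).isIso_hom⟩,
    ObjectProperty.isoMk _ (Comma.isoMk (Iso.refl a) β), rfl, ?_⟩
  ext
  exact Category.comp_id _

noncomputable def homIso (X : IsoComma F) : F.obj X.obj.left ≅ X.obj.right :=
  have : IsIso X.obj.hom := X.property
  asIso X.obj.hom

@[simp]
lemma homIso_hom (X : IsoComma F) : (homIso F X).hom = X.obj.hom := rfl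

noncomputable def pCompRIso : p F ⋙ r F ≅ 𝟭 (IsoComma F) :=
  NatIso.ofComponents
    (fun X => ObjectProperty.isoMk _ (Comma.isoMk (Iso.refl _) (homIso F X) (by simp [p, r])))
    (fun m => by ext <;> simp [p, r])

noncomputable def equivalence : A ≌ IsoComma F :=
  CategoryTheory.Equivalence.mk (r F) (p F) (Iso.refl _) (pCompRIso F)

instance : (r F).IsEquivalence := (equivalence F).isEquivalence_functor

lemma r_comp_q : r F ⋙ q F = F := rfl

end IsoComma

/-- For a functor `F : A ⥤ B` with iso-comma category `P_F`: (1) the second projection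
`q : P_F ⥤ B` is an isofibration; (2) the canonical functor `r : A ⥤ P_F` is an
equivalence of categories with `r ⋙ q = F`; (3) hence `F` is an equivalence of categories
if and only if `q` is a surjective equivalence, i.e. both an equivalence and an
isofibration. -/
theorem isoComma_q_isofibration_and_equivalence_criterion (F : A ⥤ B) :
    Isofibration (IsoComma.q F) ∧
    (IsoComma.r F).IsEquivalence ∧
    IsoComma.r F ⋙ IsoComma.q F = F ∧
    (F.IsEquivalence ↔ ((IsoComma.q F).IsEquivalence ∧ Isofibration (IsoComma.q F))) := by
  refine ⟨IsoComma.isofibration_q F, inferInstance, IsoComma.r_comp_q F, ?_⟩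
  calc F.IsEquivalence ↔ (IsoComma.r F ⋙ IsoComma.q F).IsEquivalence := Iff.rfl
    _ ↔ (IsoComma.q F).IsEquivalence :=
        Functor.isEquivalence_comp_iff_of_isEquivalence_left _ _
    _ ↔ _ := (and_iff_left (IsoComma.isofibration_q F)).symm
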